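/- Let M be a complete metric space with base point 0, and let u, v ∈ M and r, s, δ > 0 with r + s < d(u,v) be such that [u,v]_δ ⊆ B(u,r) ∪ B(v,s). Then there exist x ∈ B(u,r) and y ∈ B(v,s) with x ≠ y such that the molecule m_{xy} is a denting point of B_{F(M)} and d(u,x) + d(v,y) + d(x,y) < d(u,v) + δ. -/

import Mathlib

open Metric Set Filter NNReal

noncomputable section

/-- The topological dual of a normed space, with the norm topology on `E`
(the former Mathlib `NormedSpace.Dual`, removed from Mathlib). -/
abbrev NormedSpace.Dual (𝕜 : Type*) (E : Type*) [NontriviallyNormedField 𝕜]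
    [SeminormedAddCommGroup E] [NormedSpace 𝕜 E] : Type _ :=
  E →L[𝕜] 𝕜

namespace DeltaPaper

/-! ### Generic Banach space notions -/

variable {X : Type*} [NormedAddCommGroup X] [NormedSpace ℝ X]

/-- `x` is a Daugavet-point: every slice of the unit ball contains, for every `ε > 0`,
an element at distance at least `2 - ε` from `x`. -/
def IsDaugavetPoint (x : X) : Prop :=
  ∀ (φ : NormedSpace.Dual ℝ X) (α : ℝ), ‖φ‖ = 1 → 0 < α → ∀ ε > 0,
    ∃ y : X, ‖y‖ ≤ 1 ∧ 1 - α < φ y ∧ 2 - ε ≤ ‖x - y‖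

/-- `x` is a Δ-point: every slice of the unit ball containing `x` contains, for every
`ε > 0`, an element at distance at least `2 - ε` from `x`. -/
def IsDeltaPoint (x : X) : Prop :=
  ∀ (φ : NormedSpace.Dual ℝ X) (α : ℝ), ‖φ‖ = 1 → 0 < α → 1 - α < φ x → ∀ ε > 0,
    ∃ y : X, ‖y‖ ≤ 1 ∧ 1 - α < φ y ∧ 2 - ε ≤ ‖x - y‖

/-- `x*` is a w*-Daugavet-point of the dual of `X`. -/
def IsWeakStarDaugavetPoint (f : NormedSpace.Dual ℝ X) : Prop :=
  ∀ (x : X) (α : ℝ), ‖x‖ = 1 → 0 < α → ∀ ε > 0,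
    ∃ g : NormedSpace.Dual ℝ X, ‖g‖ ≤ 1 ∧ 1 - α < g x ∧ 2 - ε ≤ ‖f - g‖

/-- `x*` is a w*-Δ-point of the dual of `X`. -/
def IsWeakStarDeltaPoint (f : NormedSpace.Dual ℝ X) : Prop :=
  ∀ (x : X) (α : ℝ), ‖x‖ = 1 → 0 < α → 1 - α < f x → ∀ ε > 0,
    ∃ g : NormedSpace.Dual ℝ X, ‖g‖ ≤ 1 ∧ 1 - α < g x ∧ 2 - ε ≤ ‖f - g‖

/-- `x` is a denting point of the unit ball: it lies in slices of the unit ball of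
arbitrarily small diameter. -/
def IsDentingPoint (x : X) : Prop :=
  ‖x‖ ≤ 1 ∧ ∀ ε > 0, ∃ (φ : NormedSpace.Dual ℝ X) (α : ℝ), ‖φ‖ = 1 ∧ 0 < α ∧
    1 - α < φ x ∧ Metric.diam {y : X | ‖y‖ ≤ 1 ∧ 1 - α < φ y} < ε

/-- The Kuratowski measure of non-compactness of a set: the infimum of all `ε > 0`
such that the set can be covered by finitely many sets of diameter less than `ε`. -/
def kuratowski {Y : Type*} [PseudoMetricSpace Y] (A : Set Y) : ℝ :=
  sInf {ε : ℝ | 0 < ε ∧ ∃ 𝒞 : Finset (Set Y), (A ⊆ ⋃ B ∈ 𝒞, B) ∧ ∀ B ∈ 𝒞, Metric.diam B < ε}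

/-! ### The space of Lipschitz functions vanishing at a base point -/

variable {M : Type*} [PseudoMetricSpace M]

/-- The least Lipschitz constant of a function. -/
def lipConst (f : M → ℝ) : ℝ≥0 := sInf {K | LipschitzWith K f}

theorem lipschitzWith_lipConst {f : M → ℝ} (hf : ∃ K, LipschitzWith K f) :
    LipschitzWith (lipConst f) f := by
  obtain ⟨K₀, hK₀⟩ := hf
  rw [lipschitzWith_iff_dist_le_mul]
  intro x y
  rcases le_or_gt (dist x y) 0 with h | h
  · have h0 : dist x y = 0 := le_antisymm h dist_nonneg
    have := hK₀.dist_le_mul x y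
    rw [h0, mul_zero] at this ⊢
    exact this
  · rw [← div_le_iff₀ h]
    have hnn : 0 ≤ dist (f x) (f y) / dist x y := by positivity
    rw [← Real.coe_toNNReal _ hnn, NNReal.coe_le_coe]
    refine le_csInf ⟨K₀, hK₀⟩ ?_
    intro K hK
    rw [← NNReal.coe_le_coe, Real.coe_toNNReal _ hnn, div_le_iff₀ h]
    exact hK.dist_le_mul x y

theorem lipConst_le {f : M → ℝ} {K : ℝ≥0} (hK : LipschitzWith K f) : lipConst f ≤ K :=
  csInf_le (OrderBot.bddBelow _) hK

theorem lipschitzWith_smul {f : M → ℝ} {K : ℝ≥0} (hK : LipschitzWith K f) (c : ℝ) :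
    LipschitzWith (‖c‖₊ * K) (c • f) := by
  rw [lipschitzWith_iff_dist_le_mul] at *
  intro x y
  have : dist ((c • f) x) ((c • f) y) = ‖c‖ * dist (f x) (f y) := by
    simp only [Pi.smul_apply, smul_eq_mul, Real.dist_eq, ← mul_sub, abs_mul, Real.norm_eq_abs]
  rw [this, NNReal.coe_mul, coe_nnnorm, mul_assoc]
  exact mul_le_mul_of_nonneg_left (hK x y) (norm_nonneg c)

variable (M) in
/-- The submodule of `M → ℝ` consisting of Lipschitz functions vanishing at the
base point `z`. -/
def Lip0 (z : M) : Submodule ℝ (M → ℝ) where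
  carrier := {f | (∃ K, LipschitzWith K f) ∧ f z = 0}
  add_mem' := by
    rintro f g ⟨⟨K, hK⟩, hf0⟩ ⟨⟨L, hL⟩, hg0⟩
    exact ⟨⟨K + L, hK.add hL⟩, by simp [hf0, hg0]⟩
  zero_mem' := ⟨⟨0, LipschitzWith.const' 0⟩, rfl⟩
  smul_mem' := by
    rintro c f ⟨⟨K, hK⟩, hf0⟩
    exact ⟨⟨‖c‖₊ * K, lipschitzWith_smul hK c⟩, by simp [hf0]⟩

variable {z : M}

instance : NormedAddCommGroup ↥(Lip0 M z) :=
  AddGroupNorm.toNormedAddCommGroup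
    { toFun := fun f => ((lipConst (f : M → ℝ) : ℝ≥0) : ℝ)
      map_zero' := by
        have h0 : lipConst (0 : M → ℝ) = 0 :=
          le_antisymm (lipConst_le (by simpa using LipschitzWith.const' (0 : ℝ))) bot_le
        show ((lipConst ((0 : ↥(Lip0 M z)) : M → ℝ) : ℝ≥0) : ℝ) = 0
        rw [show ((0 : ↥(Lip0 M z)) : M → ℝ) = 0 from rfl, h0, NNReal.coe_zero]
      add_le' := by
        intro f g
        have hf := lipschitzWith_lipConst f.2.1
        have hg := lipschitzWith_lipConst g.2.1
        have : lipConst ((f + g : ↥(Lip0 M z)) : M → ℝ) ≤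
            lipConst (f : M → ℝ) + lipConst (g : M → ℝ) := by
          refine lipConst_le ?_
          have := hf.add hg
          convert this using 1 <;> rfl
        exact_mod_cast this
      neg' := by
        intro f
        show ((lipConst ((-f : ↥(Lip0 M z)) : M → ℝ) : ℝ≥0) : ℝ) = _
        rw [show ((-f : ↥(Lip0 M z)) : M → ℝ) = -(f : M → ℝ) from rfl]
        unfold lipConst
        congr 2
        ext K
        exact ⟨fun hK => by simpa using hK.neg, fun hK => hK.neg⟩
      eq_zero_of_map_eq_zero' := by
        intro f hf
        replace hf : ((lipConst (f : M → ℝ) : ℝ≥0) : ℝ) = 0 := hf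
        have h0 : lipConst (f : M → ℝ) = 0 := by exact_mod_cast hf
        have hl : LipschitzWith 0 (f : M → ℝ) := h0 ▸ lipschitzWith_lipConst f.2.1
        ext x
        have := hl.dist_le_mul x z
        simp only [NNReal.coe_zero, zero_mul] at this
        have hxz : (f : M → ℝ) x = (f : M → ℝ) z :=
          dist_le_zero.mp this
        simpa [f.2.2] using hxz }

theorem Lip0.norm_def (f : ↥(Lip0 M z)) : ‖f‖ = ((lipConst (f : M → ℝ) : ℝ≥0) : ℝ) := rfl

theorem Lip0.lipschitzWith (f : ↥(Lip0 M z)) : LipschitzWith (lipConst (f : M → ℝ)) (f : M → ℝ) :=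
  lipschitzWith_lipConst f.2.1

instance : NormedSpace ℝ ↥(Lip0 M z) where
  norm_smul_le c f := by
    have : lipConst ((c • f : ↥(Lip0 M z)) : M → ℝ) ≤ ‖c‖₊ * lipConst (f : M → ℝ) :=
      lipConst_le (lipschitzWith_smul (Lip0.lipschitzWith f) c)
    calc ‖c • f‖ = ((lipConst ((c • f : ↥(Lip0 M z)) : M → ℝ) : ℝ≥0) : ℝ) := rfl
      _ ≤ ((‖c‖₊ * lipConst (f : M → ℝ) : ℝ≥0) : ℝ) := by exact_mod_cast this
      _ = ‖c‖ * ‖f‖ := by push_cast [Lip0.norm_def]; rfl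

variable (M z) in
/-- The evaluation functional `δ_x ∈ Lip₀(M)*`. -/
def evalδ (x : M) : NormedSpace.Dual ℝ ↥(Lip0 M z) :=
  LinearMap.mkContinuous
    { toFun := fun f => (f : M → ℝ) x
      map_add' := fun f g => rfl
      map_smul' := fun c f => rfl }
    (dist x z)
    (by
      intro f
      have := (Lip0.lipschitzWith f).dist_le_mul x z
      simp only [f.2.2, Real.dist_eq, sub_zero] at this
      calc ‖(f : M → ℝ) x‖ = |(f : M → ℝ) x - 0| := by simp
        _ ≤ (lipConst (f : M → ℝ) : ℝ) * dist x z := by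
            simpa [f.2.2, Real.dist_eq] using (Lip0.lipschitzWith f).dist_le_mul x z
        _ = dist x z * ‖f‖ := by rw [Lip0.norm_def, mul_comm])

variable (M z) in
/-- The Lipschitz-free space over `M`: the closed linear span of the evaluation
functionals inside `Lip₀(M)*`. -/
def FreeSpace : Submodule ℝ (NormedSpace.Dual ℝ ↥(Lip0 M z)) :=
  (Submodule.span ℝ (Set.range (evalδ M z))).topologicalClosure

variable (M z) in
/-- The molecule `m_{x y} = (δ_x - δ_y)/d(x,y)` as an element of `Lip₀(M)*`. -/
def molecule (x y : M) : NormedSpace.Dual ℝ ↥(Lip0 M z) :=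
  (dist x y)⁻¹ • (evalδ M z x - evalδ M z y)

theorem molecule_mem_freeSpace (x y : M) : molecule M z x y ∈ FreeSpace M z :=
  Submodule.le_topologicalClosure _
    (Submodule.smul_mem _ _ (Submodule.sub_mem _
      (Submodule.subset_span ⟨x, rfl⟩) (Submodule.subset_span ⟨y, rfl⟩)))

variable (M z) in
/-- The molecule `m_{x y}` as an element of the free space `F(M)`. -/
def mol (x y : M) : ↥(FreeSpace M z) := ⟨molecule M z x y, molecule_mem_freeSpace x y⟩

variable (M) in
/-- A metric space is uniformly discrete if distances between distinct points are
bounded below by a positive constant. -/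
def UniformlyDiscrete : Prop := ∃ θ > (0:ℝ), ∀ x y : M, x ≠ y → θ ≤ dist x y

/-- A norm-one Lipschitz function is local if its Lipschitz constant is approximated
on pairs of arbitrarily close points. -/
def IsLocal (f : ↥(Lip0 M z)) : Prop :=
  ∀ ε > 0, ∃ u v : M, u ≠ v ∧
    ‖f‖ - ε < ((f : M → ℝ) u - (f : M → ℝ) v) / dist u v ∧ dist u v < ε

/-- `f ∈ S_{Lip₀(M)}` is a w*-Daugavet-point: for every w*-slice `S(μ, α)` of
`B_{Lip₀(M)}` (`μ` a norm-one element of `F(M)`) and every `ε > 0` there is `g` in the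
slice with `‖f - g‖ ≥ 2 - ε`. -/
def IsLipWeakStarDaugavetPoint (f : ↥(Lip0 M z)) : Prop :=
  ∀ μ : NormedSpace.Dual ℝ ↥(Lip0 M z), μ ∈ FreeSpace M z → ‖μ‖ = 1 → ∀ α > (0:ℝ), ∀ ε > (0:ℝ),
    ∃ g : ↥(Lip0 M z), ‖g‖ ≤ 1 ∧ 1 - α < μ g ∧ 2 - ε ≤ ‖f - g‖

/-- `f ∈ S_{Lip₀(M)}` is a w*-Δ-point: the same as above, but only for w*-slices
containing `f`. -/
def IsLipWeakStarDeltaPoint (f : ↥(Lip0 M z)) : Prop :=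
  ∀ μ : NormedSpace.Dual ℝ ↥(Lip0 M z), μ ∈ FreeSpace M z → ‖μ‖ = 1 → ∀ α > (0:ℝ),
    1 - α < μ f → ∀ ε > (0:ℝ),
    ∃ g : ↥(Lip0 M z), ‖g‖ ≤ 1 ∧ 1 - α < μ g ∧ 2 - ε ≤ ‖f - g‖

end DeltaPaper

open DeltaPaper NormedSpace Metric

/-!
Ekeland's variational principle, applied on `B(u, r) × B(v, s)` to the penalised length
`d(a, b) + Λ (d(u, a) + d(a, b) + d(b, v))`, yields a pair `(x, y)`, almost aligned with `u` and
`v`, that no move of a single endpoint improves by more than half the displacement. As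
`[u, v]_δ ⊆ B(u, r) ∪ B(v, s)`, every point `p` near the metric segment `[x, y]` gives such a
move, so `(x, y)` fails property (Z) quantitatively:
`θ min(d(p, x), d(p, y)) ≤ d(p, x) + d(p, y) - d(x, y)` for all `p`.

For such a pair there is a norm-one Lipschitz function `f` with `m_{xy}(f) = 1` at which the norm
of `Lip₀(M)` is, up to `η`, differentiable with derivative `m_{xy}`: every `g` in the unit ball
satisfies `‖f + t g‖ ≤ 1 + t (m_{xy}(g) + η)`. By Šmulian's argument, the slice of `B_{F(M)}` cut
out by `f` then has diameter `O(η)`.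
-/

open Topology

namespace DeltaPaper

section Slices

variable {X : Type*} [NormedAddCommGroup X] [NormedSpace ℝ X]

theorem isDentingPoint_of_forall_slice {x : X} (hx : ‖x‖ ≤ 1)
    (h : ∀ ε > 0, ∃ (φ : Dual ℝ X) (α : ℝ), ‖φ‖ ≤ 1 ∧ φ x = 1 ∧ 0 < α ∧
      ∀ y : X, ‖y‖ ≤ 1 → 1 - α < φ y → ‖y - x‖ ≤ ε) :
    IsDentingPoint x := by
  refine ⟨hx, fun ε hε => ?_⟩
  obtain ⟨φ, α, hφ, hφx, hα, hslice⟩ := h (ε / 3) (by positivity)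
  have hφ_norm : ‖φ‖ = 1 := by
    refine le_antisymm hφ ?_
    calc (1 : ℝ) = φ x := hφx.symm
      _ ≤ ‖φ x‖ := Real.le_norm_self _
      _ ≤ ‖φ‖ * ‖x‖ := φ.le_opNorm x
      _ ≤ ‖φ‖ := mul_le_of_le_one_right (norm_nonneg _) hx
  refine ⟨φ, α, hφ_norm, hα, by linarith, ?_⟩
  have hdiam : diam {y : X | ‖y‖ ≤ 1 ∧ 1 - α < φ y} ≤ ε / 3 + ε / 3 := by
    refine diam_le_of_forall_dist_le (by positivity) fun y₁ h₁ y₂ h₂ => ?_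
    calc dist y₁ y₂ ≤ dist y₁ x + dist y₂ x := dist_triangle_right _ _ _
      _ ≤ ε / 3 + ε / 3 := by
        rw [dist_eq_norm, dist_eq_norm]
        exact add_le_add (hslice y₁ h₁.1 h₁.2) (hslice y₂ h₂.1 h₂.2)
  linarith

theorem norm_sub_le_of_norm_add_smul_le {f : X} {m μ : Dual ℝ X} {t η : ℝ} (ht : 0 < t)
    (hf : ∀ g : X, ‖g‖ ≤ 1 → ‖f + t • g‖ ≤ 1 + t * (m g + η))
    (hμ : ‖μ‖ ≤ 1) (hμf : 1 - t * η < μ f) :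
    ‖μ - m‖ ≤ 2 * η := by
  have hsub : ∀ g : X, ‖g‖ ≤ 1 → μ g - m g ≤ 2 * η := by
    intro g hg
    have hμg : μ f + t * μ g ≤ 1 + t * (m g + η) :=
      calc μ f + t * μ g = μ (f + t • g) := by simp
        _ ≤ ‖μ (f + t • g)‖ := Real.le_norm_self _
        _ ≤ ‖μ‖ * ‖f + t • g‖ := μ.le_opNorm _
        _ ≤ ‖f + t • g‖ := mul_le_of_le_one_left (norm_nonneg _) hμ
        _ ≤ 1 + t * (m g + η) := hf g hg
    have : t * (μ g - m g) ≤ t * (2 * η) := by linarith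
    exact le_of_mul_le_mul_left this ht
  have hη : 0 ≤ 2 * η := by simpa using hsub 0
  refine ContinuousLinearMap.opNorm_le_of_unit_norm hη fun g hg => ?_
  have hneg := hsub (-g) (by simp [hg])
  simp only [map_neg] at hneg
  rw [sub_apply, Real.norm_eq_abs, abs_le]
  exact ⟨by linarith, hsub g hg.le⟩

end Slices

section Ekeland

variable {X : Type*} [MetricSpace X] {F : X → ℝ} {ε : ℝ}

def ekelandSet (F : X → ℝ) (ε : ℝ) (x : X) : Set X :=
  {y | F y + ε * dist y x ≤ F x}

theorem self_mem_ekelandSet (x : X) : x ∈ ekelandSet F ε x := by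
  simp [ekelandSet]

theorem ekelandSet_subset (hε : 0 ≤ ε) {x y : X} (hy : y ∈ ekelandSet F ε x) :
    ekelandSet F ε y ⊆ ekelandSet F ε x := fun w (hw : F w + ε * dist w y ≤ F y) => by
  have hy : F y + ε * dist y x ≤ F x := hy
  show F w + ε * dist w x ≤ F x
  nlinarith [dist_triangle w y x]

theorem isClosed_ekelandSet (hF : LowerSemicontinuous F) (x : X) :
    IsClosed (ekelandSet F ε x) :=
  (hF.add (by fun_prop : Continuous fun y => ε * dist y x).lowerSemicontinuous).isClosed_preimage
    (F x)

-- Each `g (n + 1)` minimises `F` on `ekelandSet F ε (g n)` up to `2⁻ⁿ`.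
theorem exists_seq_ekelandSet (hbdd : BddBelow (range F)) (hε : 0 < ε) (x₀ : X) :
    ∃ g : ℕ → X, g 0 = x₀ ∧ Antitone (ekelandSet F ε ∘ g) ∧
      ∀ n, ∀ y ∈ ekelandSet F ε (g (n + 1)), dist y (g (n + 1)) ≤ (1 / 2) ^ n / ε := by
  set S := ekelandSet F ε
  have exists_next : ∀ (x : X) (n : ℕ), ∃ y ∈ S x, F y ≤ sInf (F '' S x) + (1 / 2) ^ n := by
    intro x n
    obtain ⟨_, ⟨y, hy, rfl⟩, hlt⟩ := exists_lt_of_csInf_lt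
      ⟨F x, mem_image_of_mem F (self_mem_ekelandSet x)⟩
      (lt_add_of_pos_right (sInf (F '' S x)) (by positivity : (0 : ℝ) < (1 / 2) ^ n))
    exact ⟨y, hy, hlt.le⟩
  choose next next_mem next_le using exists_next
  let g : ℕ → X := fun n => Nat.rec x₀ (fun n x => next x n) n
  have g_succ : ∀ n, g (n + 1) = next (g n) n := fun n => rfl
  refine ⟨g, rfl, antitone_nat_of_succ_le fun n =>
    ekelandSet_subset hε.le (g_succ n ▸ next_mem (g n) n), fun n y hy => ?_⟩
  have hy' : F y + ε * dist y (g (n + 1)) ≤ F (g (n + 1)) := hy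
  have h₁ : sInf (F '' S (g n)) ≤ F y := csInf_le (hbdd.mono (image_subset_range _ _))
    (mem_image_of_mem F (ekelandSet_subset hε.le (g_succ n ▸ next_mem (g n) n) hy))
  have h₂ : F (g (n + 1)) ≤ sInf (F '' S (g n)) + (1 / 2) ^ n := g_succ n ▸ next_le (g n) n
  rw [le_div_iff₀ hε]
  linarith

/-- Ekeland's variational principle. -/
theorem exists_forall_le_add_mul_dist [CompleteSpace X] (hF : LowerSemicontinuous F)
    (hbdd : BddBelow (range F)) (hε : 0 < ε) (x₀ : X) :
    ∃ w, F w ≤ F x₀ ∧ ∀ x, F w ≤ F x + ε * dist x w := by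
  obtain ⟨g, rfl, S_anti, S_small⟩ := exists_seq_ekelandSet hbdd hε x₀
  set S := ekelandSet F ε
  have dist_le : ∀ n m, n ≤ m → ∀ y ∈ S (g (m + 1)), dist y (g (n + 1)) ≤ (1 / 2) ^ n / ε :=
    fun n m hnm y hy => S_small n y (S_anti (Nat.succ_le_succ hnm) hy)
  have tendsto_bound : Tendsto (fun n : ℕ => (1 / 2 : ℝ) ^ n / ε) atTop (𝓝 0) := by
    simpa using (tendsto_pow_atTop_nhds_zero_of_lt_one (by norm_num : (0 : ℝ) ≤ 1 / 2)
      (by norm_num)).div_const ε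
  have cauchy : CauchySeq fun n => g (n + 1) :=
    cauchySeq_of_le_tendsto_0' _ (fun n m hnm => by
      rw [dist_comm]; exact dist_le n m hnm _ (self_mem_ekelandSet _)) tendsto_bound
  obtain ⟨w, hw⟩ := cauchySeq_tendsto_of_complete cauchy
  have w_mem : ∀ n, w ∈ S (g (n + 1)) := fun n => (isClosed_ekelandSet hF _).mem_of_tendsto hw
    (eventually_atTop.2 ⟨n, fun m hm => S_anti (Nat.succ_le_succ hm) (self_mem_ekelandSet _)⟩)
  refine ⟨w, ?_, fun x => ?_⟩
  · have h : F w + ε * dist w (g 0) ≤ F (g 0) := S_anti (Nat.zero_le 1) (w_mem 0)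
    nlinarith [dist_nonneg (x := w) (y := g 0)]
  · by_contra! hlt
    have x_mem : ∀ n, x ∈ S (g (n + 1)) := fun n => ekelandSet_subset hε.le (w_mem n) hlt.le
    have hdist : dist x w ≤ 0 := by
      refine ge_of_tendsto' (tendsto_bound.const_mul 2 |>.trans (by simp)) fun n => ?_
      calc dist x w ≤ dist x (g (n + 1)) + dist w (g (n + 1)) := dist_triangle_right _ _ _
        _ ≤ (1 / 2) ^ n / ε + (1 / 2) ^ n / ε :=
          add_le_add (S_small n x (x_mem n)) (S_small n w (w_mem n))
        _ = 2 * ((1 / 2) ^ n / ε) := by ring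
    rw [dist_le_zero.1 hdist, dist_self, mul_zero, add_zero] at hlt
    exact lt_irrefl _ hlt

theorem exists_forall_le_add_mul_dist_of_isComplete {s : Set X} (hs : IsComplete s)
    (hF : LowerSemicontinuous F) (hbdd : BddBelow (F '' s)) (hε : 0 < ε) {x₀ : X} (hx₀ : x₀ ∈ s) :
    ∃ w ∈ s, F w ≤ F x₀ ∧ ∀ x ∈ s, F w ≤ F x + ε * dist x w := by
  have := hs.completeSpace_coe
  obtain ⟨w, hw₀, hw⟩ := exists_forall_le_add_mul_dist (F := F ∘ Subtype.val)
    (hF.comp continuous_subtype_val) (by rwa [range_comp, Subtype.range_coe]) hε ⟨x₀, hx₀⟩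
  exact ⟨w, w.2, hw₀, fun x hx => hw ⟨x, hx⟩⟩

end Ekeland

section Lipschitz

variable {M : Type*} [PseudoMetricSpace M] {z : M}

theorem Lip0.norm_le_of_forall_sub_le {f : Lip0 M z} {B : ℝ} (hB : 0 ≤ B)
    (h : ∀ p q, (f : M → ℝ) p - (f : M → ℝ) q ≤ B * dist p q) : ‖f‖ ≤ B := by
  have hlip : LipschitzWith B.toNNReal (f : M → ℝ) :=
    .of_le_add_mul _ fun p q => by rw [Real.coe_toNNReal _ hB]; linarith [h p q]
  rw [Lip0.norm_def, ← Real.coe_toNNReal _ hB]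
  exact_mod_cast lipConst_le hlip

theorem Lip0.sub_le (f : Lip0 M z) (p q : M) : (f : M → ℝ) p - (f : M → ℝ) q ≤ ‖f‖ * dist p q := by
  rw [Lip0.norm_def]
  linarith [(Lip0.lipschitzWith f).le_add_mul p q]

theorem molecule_apply (x y : M) (f : Lip0 M z) :
    molecule M z x y f = ((f : M → ℝ) x - (f : M → ℝ) y) / dist x y := by
  rw [div_eq_inv_mul]; rfl

theorem norm_molecule_le (x y : M) : ‖molecule M z x y‖ ≤ 1 := by
  refine ContinuousLinearMap.opNorm_le_bound _ zero_le_one fun f => ?_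
  rw [molecule_apply, one_mul, norm_div, Real.norm_eq_abs, Real.norm_eq_abs, abs_dist]
  refine div_le_of_le_mul₀ dist_nonneg (norm_nonneg f) ?_
  rw [abs_sub_le_iff]
  exact ⟨Lip0.sub_le f x y, by simpa [dist_comm] using Lip0.sub_le f y x⟩

theorem sub_le_slope_mul_dist_add {g : M → ℝ} (hg : ∀ p q, g p - g q ≤ dist p q) {x y : M}
    (hxy : dist x y ≠ 0) (p q : M) :
    g p - g q ≤ (g x - g y) / dist x y * dist p q + 2 * (dist p x + dist q y) := by
  set m := (g x - g y) / dist x y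
  have hm : |m| ≤ 1 := by
    rw [abs_div, abs_dist, div_le_one₀ (dist_nonneg.lt_of_ne' hxy), abs_sub_le_iff]
    exact ⟨hg x y, by simpa [dist_comm] using hg y x⟩
  have hdist : |dist x y - dist p q| ≤ dist p x + dist q y := by
    rw [abs_sub_le_iff]
    constructor
    · linarith [dist_triangle4 x p q y, dist_comm x p]
    · linarith [dist_triangle4 p x y q, dist_comm y q]
  have hslope : m * (dist x y - dist p q) ≤ dist p x + dist q y :=
    calc m * (dist x y - dist p q) ≤ |m| * |dist x y - dist p q| := by
          rw [← abs_mul]; exact le_abs_self _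
      _ ≤ 1 * (dist p x + dist q y) := mul_le_mul hm hdist (abs_nonneg _) zero_le_one
      _ = dist p x + dist q y := one_mul _
  have hmd : m * dist x y = g x - g y := div_mul_cancel₀ _ hxy
  linarith [hg p x, hg y q, dist_comm y q]

end Lipschitz

section PropertyZ

variable {M : Type*} [PseudoMetricSpace M]

/-- Negation of property (Z) for the pair `(x, y)`, with a uniform constant `θ`. -/
def FailsPropertyZ (θ : ℝ) (x y : M) : Prop :=
  ∀ p : M, θ * min (dist p x) (dist p y) ≤ dist p x + dist p y - dist x y

theorem FailsPropertyZ.mono {θ θ' : ℝ} {x y : M} (h : FailsPropertyZ θ x y) (hle : θ' ≤ θ) :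
    FailsPropertyZ θ' x y := fun p =>
  (mul_le_mul_of_nonneg_right hle (le_min dist_nonneg dist_nonneg)).trans (h p)

theorem exists_failsPropertyZ_of_near {x y : M} {c γ : ℝ} (hc : 0 < c) (hγ : 0 < γ)
    (h : ∀ p : M, dist p x + dist p y - dist x y < γ →
      c * min (dist p x) (dist p y) ≤ dist p x + dist p y - dist x y) :
    ∃ θ > 0, FailsPropertyZ θ x y := by
  refine ⟨min c (γ / (γ + dist x y)), lt_min hc (by positivity), fun p => ?_⟩
  have hmin : 0 ≤ min (dist p x) (dist p y) := le_min dist_nonneg dist_nonneg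
  rcases lt_or_ge (dist p x + dist p y - dist x y) γ with hlt | hge
  · exact (mul_le_mul_of_nonneg_right (min_le_left _ _) hmin).trans (h p hlt)
  · calc min c (γ / (γ + dist x y)) * min (dist p x) (dist p y)
        ≤ γ / (γ + dist x y) * (dist p x + dist p y) := by
          gcongr
          · exact min_le_right _ _
          · linarith [min_le_left (dist p x) (dist p y), dist_nonneg (x := p) (y := y)]
      _ ≤ dist p x + dist p y - dist x y := by
          rw [div_mul_eq_mul_div, div_le_iff₀ (by positivity)]
          nlinarith [dist_nonneg (x := x) (y := y)]

/-- The extra slope `4 t` of the second piece far from `y` makes both pieces equal `d(x, y)`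
at `x`. -/
def peakFun (x y : M) (t : ℝ) (p : M) : ℝ :=
  min (dist x y - (1 - 2 * t) * dist p x)
    ((1 - 2 * t) * dist p y + 4 * t * max 0 (dist p y - dist x y / 2))

theorem peakFun_left (x y : M) (t : ℝ) : peakFun x y t x = dist x y := by
  rw [peakFun, dist_self, max_eq_right (by linarith [dist_nonneg (x := x) (y := y)])]
  ring_nf
  exact min_self _

theorem peakFun_right (x y : M) {t : ℝ} (ht : 0 ≤ t) : peakFun x y t y = 0 := by
  rw [peakFun, dist_self, max_eq_left (by linarith [dist_nonneg (x := x) (y := y)]), dist_comm]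
  ring_nf
  exact min_eq_right (by positivity)

theorem dist_le_of_peakFun_lt {x y q : M} {θ ρ t : ℝ} (hZ : FailsPropertyZ θ x y) (hθ : 0 < θ)
    (ht : 0 < t) (ht₆ : t ≤ 1 / 6) (hd : 0 < dist x y) (hρ : ρ ≤ dist x y / 8)
    (htρ : 8 * t * dist x y ≤ θ * ρ) (hq : peakFun x y t q < dist x y - (1 - 2 * t) * dist q x) :
    dist q y ≤ 3 * ρ / 8 := by
  have hright : (1 - 2 * t) * dist q y + 4 * t * max 0 (dist q y - dist x y / 2) <
      dist x y - (1 - 2 * t) * dist q x :=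
    (min_lt_iff.1 hq).resolve_left (lt_irrefl _)
  have hmax := le_max_left 0 (dist q y - dist x y / 2)
  have htri : dist x y ≤ dist q x + dist q y := by linarith [dist_triangle x q y, dist_comm x q]
  have hexcess : dist q x + dist q y - dist x y < 3 * t * dist x y := by
    nlinarith [mul_nonneg (by linarith : (0 : ℝ) ≤ 1 / 6 - t) (by linarith : 0 ≤
      dist q x + dist q y - dist x y), mul_nonneg ht.le hmax]
  have hmin : min (dist q x) (dist q y) < 3 * ρ / 8 := by
    by_contra! hge
    nlinarith [hZ q, mul_le_mul_of_nonneg_left hge hθ.le]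
  have hθt : 64 * t ≤ θ := by nlinarith
  by_contra! hfar
  have hqx : dist q x < 3 * ρ / 8 := (min_lt_iff.1 hmin).resolve_right (by linarith)
  -- far from `y`, the second piece is too steep to lie below the first one at a point near `x`
  rw [max_eq_right (by linarith)] at hright
  have hZq : θ * dist q x ≤ dist q x + dist q y - dist x y := by
    simpa [min_eq_left (by linarith : dist q x ≤ dist q y)] using hZ q
  nlinarith [mul_nonneg (by linarith : (0 : ℝ) ≤ θ - 4 * t) (dist_nonneg (x := q) (y := x)),
    mul_nonneg (mul_nonneg ht.le hθ.le) (dist_nonneg (x := q) (y := x))]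

theorem peakFun_sub_le {x y : M} {θ ρ t : ℝ} (hZ : FailsPropertyZ θ x y) (hθ : 0 < θ)
    (ht : 0 < t) (ht₆ : t ≤ 1 / 6) (hd : 0 < dist x y) (hρ : ρ ≤ dist x y / 8)
    (htρ : 8 * t * dist x y ≤ θ * ρ) (p q : M) :
    peakFun x y t p - peakFun x y t q ≤ (1 - 2 * t) * dist p q ∨
      dist p x + dist q y ≤ 2 * ρ ∧ peakFun x y t p - peakFun x y t q ≤ dist p q := by
  have hρ₀ : 0 < ρ := pos_of_mul_pos_right (lt_of_lt_of_le (by positivity) htρ) hθ.le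
  have hθt : 64 * t ≤ θ := by nlinarith
  have hpx := abs_dist_sub_le p q x
  have hpy := abs_dist_sub_le p q y
  rw [abs_sub_le_iff] at hpx hpy
  have hleft : peakFun x y t p ≤ dist x y - (1 - 2 * t) * dist p x := min_le_left _ _
  have hright : peakFun x y t p ≤
      (1 - 2 * t) * dist p y + 4 * t * max 0 (dist p y - dist x y / 2) := min_le_right _ _
  rcases le_or_gt (dist x y - (1 - 2 * t) * dist q x) (peakFun x y t q) with hq | hq
  · left
    nlinarith [mul_le_mul_of_nonneg_left hpx.2 (by linarith : (0 : ℝ) ≤ 1 - 2 * t)]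
  have hqy := dist_le_of_peakFun_lt hZ hθ ht ht₆ hd hρ htρ hq
  have hFq : peakFun x y t q = (1 - 2 * t) * dist q y := by
    have hlt : (1 - 2 * t) * dist q y + 4 * t * max 0 (dist q y - dist x y / 2) <
        dist x y - (1 - 2 * t) * dist q x :=
      (min_lt_iff.1 hq).resolve_left (lt_irrefl _)
    rw [peakFun, min_eq_right hlt.le, max_eq_left (by linarith), mul_zero, add_zero]
  rw [hFq]
  by_cases hpy' : dist p y ≤ dist x y / 2
  · left
    rw [max_eq_left (by linarith), mul_zero, add_zero] at hright
    nlinarith [mul_le_mul_of_nonneg_left hpy.1 (by linarith : (0 : ℝ) ≤ 1 - 2 * t)]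
  by_cases hpx' : dist p x ≤ ρ
  · right
    refine ⟨by linarith, ?_⟩
    have hZp : θ * dist p x ≤ dist p x + dist p y - dist x y := by
      simpa [min_eq_left (by linarith : dist p x ≤ dist p y)] using hZ p
    have hZq : θ * dist q y ≤ dist q x + dist q y - dist x y := by
      simpa [min_eq_right (by linarith [dist_triangle x q y, dist_comm x q] : dist q y ≤ dist q x)]
        using hZ q
    nlinarith [mul_nonneg (by linarith : (0 : ℝ) ≤ θ - 4 * t)
      (add_nonneg (dist_nonneg (x := p) (y := x)) (dist_nonneg (x := q) (y := y)))]
  · left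
    -- `p` is far from both `x` and `y`, hence far from the segment
    have hZp : θ * ρ ≤ dist p x + dist p y - dist x y :=
      (mul_le_mul_of_nonneg_left (le_min (by linarith) (by linarith)) hθ.le).trans (hZ p)
    nlinarith [mul_le_mul_of_nonneg_left hpy.1 (by linarith : (0 : ℝ) ≤ 1 - 2 * t),
      mul_nonneg (mul_nonneg ht.le (by linarith : (0 : ℝ) ≤ 3 - 8 * t)) hd.le]

end PropertyZ

section Denting

variable {M : Type*} [PseudoMetricSpace M] {z : M}

theorem norm_add_smul_le_of_forall_sub_le {f g : Lip0 M z} {x y : M} {t ρ η : ℝ} (ht : 0 < t)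
    (ht₁ : t ≤ 1) (hη : 0 ≤ η) (hd : 0 < dist x y) (hρ : 4 * ρ ≤ dist x y)
    (hρη : 8 * ρ ≤ η * dist x y)
    (hf : ∀ p q, (f : M → ℝ) p - (f : M → ℝ) q ≤ (1 - 2 * t) * dist p q ∨
      dist p x + dist q y ≤ 2 * ρ ∧ (f : M → ℝ) p - (f : M → ℝ) q ≤ dist p q)
    (hg : ‖g‖ ≤ 1) :
    ‖f + t • g‖ ≤ 1 + t * (molecule M z x y g + η) := by
  set m := molecule M z x y g
  have hg₁ : ∀ p q, (g : M → ℝ) p - (g : M → ℝ) q ≤ dist p q := fun p q =>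
    (Lip0.sub_le g p q).trans (mul_le_of_le_one_left dist_nonneg hg)
  have hm : -1 ≤ m := by
    have : |m| ≤ 1 :=
      calc |m| = ‖molecule M z x y g‖ := (Real.norm_eq_abs _).symm
        _ ≤ ‖molecule M z x y‖ * ‖g‖ := (molecule M z x y).le_opNorm g
        _ ≤ 1 := mul_le_one₀ (norm_molecule_le x y) (norm_nonneg _) hg
    exact (abs_le.1 this).1
  refine Lip0.norm_le_of_forall_sub_le (by nlinarith) fun p q => ?_
  have hslope := sub_le_slope_mul_dist_add hg₁ hd.ne' p q
  rw [← molecule_apply] at hslope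
  show (f : M → ℝ) p + t * (g : M → ℝ) p - ((f : M → ℝ) q + t * (g : M → ℝ) q) ≤
    (1 + t * (m + η)) * dist p q
  rcases hf p q with h | ⟨hnear, h⟩
  · nlinarith [hg₁ p q, mul_nonneg (mul_nonneg ht.le (by linarith : 0 ≤ m + η + 1))
      (dist_nonneg (x := p) (y := q))]
  · have hσ : dist x y / 2 ≤ dist p q := by linarith [dist_triangle4 x p q y, dist_comm x p]
    nlinarith [mul_nonneg ht.le (by nlinarith : 0 ≤ η * dist p q - 2 * (dist p x + dist q y))]

theorem exists_lip0_peak {x y : M} {θ η : ℝ} (hZ : FailsPropertyZ θ x y) (hθ : 0 < θ)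
    (hd : 0 < dist x y) (hη : 0 < η) :
    ∃ (f : Lip0 M z) (t : ℝ), 0 < t ∧ ‖f‖ ≤ 1 ∧ molecule M z x y f = 1 ∧
      ∀ g : Lip0 M z, ‖g‖ ≤ 1 → ‖f + t • g‖ ≤ 1 + t * (molecule M z x y g + η) := by
  set θ' := min θ (1 / 2)
  set ρ := min η 1 * dist x y / 8 with hρ_def
  set t := θ' * ρ / (8 * dist x y) with ht_def
  have hθ' : 0 < θ' := lt_min hθ one_half_pos
  have hρ : ρ ≤ dist x y / 8 := by
    rw [hρ_def, div_le_div_iff_of_pos_right (by norm_num)]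
    exact mul_le_of_le_one_left hd.le (min_le_right η 1)
  have hρη : 8 * ρ ≤ η * dist x y := by
    rw [hρ_def, mul_div_cancel₀ _ (by norm_num)]
    exact mul_le_mul_of_nonneg_right (min_le_left η 1) hd.le
  have ht : 0 < t := by positivity
  have htρ : 8 * t * dist x y = θ' * ρ := by rw [ht_def]; field_simp
  have ht₆ : t ≤ 1 / 6 := by
    have := min_le_right θ (1 / 2)
    nlinarith
  have hcases := peakFun_sub_le (hZ.mono (min_le_left _ _)) hθ' ht ht₆ hd hρ htρ.le
  have hF : ∀ p q, peakFun x y t p - peakFun x y t q ≤ dist p q := fun p q =>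
    (hcases p q).elim (fun h => h.trans (mul_le_of_le_one_left dist_nonneg (by linarith))) (·.2)
  let f : Lip0 M z := ⟨fun p => peakFun x y t p - peakFun x y t z,
    ⟨1, .of_le_add_mul 1 fun p q => by rw [NNReal.coe_one, one_mul]; linarith [hF p q]⟩,
    sub_self _⟩
  have hf : ∀ p q, (f : M → ℝ) p - (f : M → ℝ) q = peakFun x y t p - peakFun x y t q :=
    fun p q => sub_sub_sub_cancel_right _ _ _
  refine ⟨f, t, ht, ?_, ?_, fun g hg => ?_⟩
  · exact Lip0.norm_le_of_forall_sub_le zero_le_one fun p q => by rw [hf, one_mul]; exact hF p q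
  · rw [molecule_apply, hf, peakFun_left, peakFun_right x y ht.le, sub_zero, div_self hd.ne']
  · exact norm_add_smul_le_of_forall_sub_le ht (by linarith) hη.le hd (by linarith) hρη
      (fun p q => hf p q ▸ hcases p q) hg

theorem isDentingPoint_mol {x y : M} (hd : 0 < dist x y) {θ : ℝ} (hθ : 0 < θ)
    (hZ : FailsPropertyZ θ x y) : IsDentingPoint (mol M z x y) := by
  refine isDentingPoint_of_forall_slice (norm_molecule_le x y) fun ε hε => ?_
  obtain ⟨f, t, ht, hf, hfm, hpeak⟩ := exists_lip0_peak (z := z) hZ hθ hd (half_pos hε)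
  let φ : Dual ℝ (FreeSpace M z) :=
    (ContinuousLinearMap.apply ℝ ℝ f).comp (FreeSpace M z).subtypeL
  refine ⟨φ, t * (ε / 2), ?_, hfm, by positivity, fun w hw hwφ => ?_⟩
  · refine ContinuousLinearMap.opNorm_le_bound _ zero_le_one fun w => ?_
    calc ‖φ w‖ = ‖(w : Dual ℝ (Lip0 M z)) f‖ := rfl
      _ ≤ ‖(w : Dual ℝ (Lip0 M z))‖ * ‖f‖ := ContinuousLinearMap.le_opNorm _ _
      _ ≤ 1 * ‖w‖ := by rw [one_mul]; exact mul_le_of_le_one_right (norm_nonneg _) hf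
  · calc ‖w - mol M z x y‖ = ‖(w : Dual ℝ (Lip0 M z)) - molecule M z x y‖ := rfl
      _ ≤ 2 * (ε / 2) := norm_sub_le_of_norm_add_smul_le ht hpeak hw hwφ
      _ = ε := by ring

end Denting

theorem exists_pair_failsPropertyZ {M : Type*} [MetricSpace M] [CompleteSpace M] {u v : M}
    {r s δ : ℝ} (hr : 0 ≤ r) (hs : 0 ≤ s) (hδ : 0 < δ)
    (hseg : {p : M | dist u p + dist v p < dist u v + δ} ⊆ closedBall u r ∪ closedBall v s) :
    ∃ x ∈ closedBall u r, ∃ y ∈ closedBall v s,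
      dist u x + dist x y + dist y v ≤ dist u v + δ / 4 ∧ ∃ θ > 0, FailsPropertyZ θ x y := by
  set D := dist u v
  set Λ := 4 * (r + s) / δ
  have hΛ : 0 ≤ Λ := by positivity
  have hΛδ : Λ * δ = 4 * (r + s) := div_mul_cancel₀ _ hδ.ne'
  set P : Set (M × M) := {ab | dist u ab.1 ≤ r ∧ dist v ab.2 ≤ s ∧
    dist u ab.1 + dist ab.1 ab.2 + dist ab.2 v ≤ D + δ / 2}
  have hP : IsClosed P := by
    show IsClosed ({ab : M × M | dist u ab.1 ≤ r} ∩ ({ab | dist v ab.2 ≤ s} ∩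
      {ab | dist u ab.1 + dist ab.1 ab.2 + dist ab.2 v ≤ D + δ / 2}))
    refine (isClosed_le ?_ ?_).inter ((isClosed_le ?_ ?_).inter (isClosed_le ?_ ?_)) <;> fun_prop
  obtain ⟨⟨x, y⟩, ⟨hx, hy, -⟩, hle, hmin⟩ := exists_forall_le_add_mul_dist_of_isComplete
    (F := fun ab : M × M => dist ab.1 ab.2 + Λ * (dist u ab.1 + dist ab.1 ab.2 + dist ab.2 v))
    hP.isComplete (by fun_prop : Continuous _).lowerSemicontinuous
    ⟨0, by rintro _ ⟨ab, -, rfl⟩; positivity⟩ one_half_pos (x₀ := (u, v))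
    ⟨by simp [hr], by simp [hs], by simp; linarith⟩
  simp only [dist_self, zero_add, add_zero] at hle
  have hD : D ≤ dist u x + dist x y + dist y v := by
    linarith [dist_triangle4 u x y v]
  have hbudget : dist u x + dist x y + dist y v ≤ D + δ / 4 := by
    nlinarith [dist_comm v y]
  refine ⟨x, mem_closedBall'.2 hx, y, mem_closedBall'.2 hy, hbudget, ?_⟩
  refine exists_failsPropertyZ_of_near (c := (2 * (1 + Λ))⁻¹) (by positivity)
    (by positivity : 0 < δ / 4) fun p hp => ?_
  have hup := dist_triangle u x p
  have hvp := dist_triangle v y p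
  have hp_seg : dist u p + dist v p < D + δ := by
    linarith [dist_comm x p, dist_comm y p, dist_comm y v]
  -- Ekeland's inequality against `(x, y)` with one endpoint moved to `p`
  have key : min (dist p x) (dist p y) / 2 ≤ (1 + Λ) * (dist p x + dist p y - dist x y) := by
    rcases hseg hp_seg with hpu | hpv
    · have := hmin (p, y) ⟨mem_closedBall'.1 hpu, hy, by linarith [dist_comm x p]⟩
      simp only [Prod.dist_eq, dist_self, max_eq_left dist_nonneg] at this
      nlinarith [min_le_left (dist p x) (dist p y), dist_comm x p]
    · have := hmin (x, p) ⟨hx, mem_closedBall'.1 hpv, by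
        linarith [dist_comm x p, dist_triangle p y v]⟩
      simp only [Prod.dist_eq, dist_self, max_eq_right dist_nonneg] at this
      nlinarith [min_le_right (dist p x) (dist p y), dist_comm x p, dist_triangle p y v]
  rw [← div_eq_inv_mul, div_le_iff₀ (by positivity)]
  linarith

end DeltaPaper

/-- Lemma 2.6. Let `M` be complete, `u, v ∈ M` and `r, s, δ > 0` with
`r + s < d(u,v)` be such that `[u,v]_δ ⊆ B(u,r) ∪ B(v,s)`. Then there are `x ∈ B(u,r)` and
`y ∈ B(v,s)`, `x ≠ y`, such that `m_{xy}` is a denting point of `B_{F(M)}` and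
`d(u,x) + d(v,y) + d(x,y) < d(u,v) + δ`. -/
theorem statement4 {M : Type*} [MetricSpace M] [CompleteSpace M] (z : M)
    (u v : M) (r s δ : ℝ) (hr : 0 < r) (hs : 0 < s) (hδ : 0 < δ)
    (hrs : r + s < dist u v)
    (hseg : {p : M | dist u p + dist v p < dist u v + δ} ⊆
      closedBall u r ∪ closedBall v s) :
    ∃ x ∈ closedBall u r, ∃ y ∈ closedBall v s, x ≠ y ∧
      IsDentingPoint (mol M z x y) ∧
      dist u x + dist v y + dist x y < dist u v + δ := by
  obtain ⟨x, hx, y, hy, hbudget, θ, hθ, hZ⟩ := exists_pair_failsPropertyZ hr.le hs.le hδ hseg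
  have hxy : 0 < dist x y := by
    linarith [dist_triangle4 u x y v, mem_closedBall'.1 hx, mem_closedBall'.1 hy, dist_comm y v]
  refine ⟨x, hx, y, hy, dist_pos.1 hxy, isDentingPoint_mol hxy hθ hZ, ?_⟩
  linarith [dist_comm v y]
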